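/- Lax pair for the system governing deformations of surfaces preserving the Weingarten operator. Let U ⊆ ℝ² be open, let H_1, H_2, β_{12}, β_{21} : U → ℝ be smooth, and let η_1 be a smooth function of the first coordinate only and η_2 of the second coordinate only, with derivatives η_1', η_2'. For λ ∈ ℝ with λ + η_1 > 0 and λ + η_2 > 0 on U, define the 3×3 matrix functions A_1(λ) = [[0, −√((λ+η_2)/(λ+η_1))·β_{21}, H_1/√(λ+η_1)], [√((λ+η_2)/(λ+η_1))·β_{21}, 0, 0], [−H_1/√(λ+η_1), 0, 0]] and A_2(λ) = [[0, √((λ+η_1)/(λ+η_2))·β_{12}, 0], [−√((λ+η_1)/(λ+η_2))·β_{12}, 0, H_2/√(λ+η_2)], [0, −H_2/√(λ+η_2), 0]]. Then the zero-curvature equation ∂_1 A_2(λ) − ∂_2 A_1(λ) = A_1(λ)A_2(λ) − A_2(λ)A_1(λ) holds on U for every such λ if and only if (H_1, H_2, β_{12}, β_{21}) satisfies system (4) on U: ∂_1 H_2 = β_{12} H_1, ∂_2 H_1 = β_{21} H_2, ∂_1 β_{12} + ∂_2 β_{21} = 0, and η_1 ∂_1 β_{12} + η_2 ∂_2 β_{21}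 + (1/2)η_1' β_{12} + (1/2)η_2' β_{21} + H_1 H_2 = 0. -/

import Mathlib

open scoped BigOperators

/-- Partial derivative of a scalar function on `ℝ²` in the `k`-th coordinate direction. -/
noncomputable def pd {n : ℕ} (k : Fin n) (f : (Fin n → ℝ) → ℝ) : (Fin n → ℝ) → ℝ :=
  fun x => fderiv ℝ f x (Pi.single k 1)

/-- The `(a,b)` entry of the first matrix `A_1(λ)` of the Lax pair. -/
noncomputable def laxA1 (η₁ η₂ : ℝ → ℝ) (β₂₁ H₁ : (Fin 2 → ℝ) → ℝ) (lam : ℝ)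
    (a b : Fin 3) : (Fin 2 → ℝ) → ℝ := fun x =>
  !![0, -(Real.sqrt ((lam + η₂ (x 1)) / (lam + η₁ (x 0))) * β₂₁ x),
       H₁ x / Real.sqrt (lam + η₁ (x 0));
     Real.sqrt ((lam + η₂ (x 1)) / (lam + η₁ (x 0))) * β₂₁ x, 0, 0;
     -(H₁ x / Real.sqrt (lam + η₁ (x 0))), 0, 0] a b

/-- The `(a,b)` entry of the second matrix `A_2(λ)` of the Lax pair. -/
noncomputable def laxA2 (η₁ η₂ : ℝ → ℝ) (β₁₂ H₂ : (Fin 2 → ℝ) → ℝ) (lam : ℝ)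
    (a b : Fin 3) : (Fin 2 → ℝ) → ℝ := fun x =>
  !![0, Real.sqrt ((lam + η₁ (x 0)) / (lam + η₂ (x 1))) * β₁₂ x, 0;
     -(Real.sqrt ((lam + η₁ (x 0)) / (lam + η₂ (x 1))) * β₁₂ x), 0,
       H₂ x / Real.sqrt (lam + η₂ (x 1));
     0, -(H₂ x / Real.sqrt (lam + η₂ (x 1))), 0] a b

lemma pd_neg {k : Fin 2} (f : (Fin 2 → ℝ) → ℝ) (x : Fin 2 → ℝ) :
    pd k (fun y => -f y) x = -pd k f x := by
  simp [pd, fderiv_neg]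

lemma pd_zero {k : Fin 2} (x : Fin 2 → ℝ) : pd k (fun _ => (0:ℝ)) x = 0 := by
  simp [pd]

lemma pd_srm (φ ψ : ℝ → ℝ) (hφ : ContDiff ℝ (⊤ : ℕ∞) φ) (hψ : ContDiff ℝ (⊤ : ℕ∞) ψ)
    (β : (Fin 2 → ℝ) → ℝ)
    (x : Fin 2 → ℝ) (hβ : DifferentiableAt ℝ β x) (i j : Fin 2) (hij : i ≠ j) (lam : ℝ)
    (hp : 0 < lam + φ (x i)) (hq : 0 < lam + ψ (x j)) :
    pd i (fun y => Real.sqrt ((lam + φ (y i)) / (lam + ψ (y j))) * β y) x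
      = Real.sqrt (lam + φ (x i)) / Real.sqrt (lam + ψ (x j)) * pd i β x
        + β x * (deriv φ (x i) /
            (2 * (Real.sqrt (lam + φ (x i)) * Real.sqrt (lam + ψ (x j))))) := by
  have hpi : HasFDerivAt (fun y : Fin 2 → ℝ => y i)
      (ContinuousLinearMap.proj i : (Fin 2 → ℝ) →L[ℝ] ℝ) x :=
    (ContinuousLinearMap.proj i : (Fin 2 → ℝ) →L[ℝ] ℝ).hasFDerivAt
  have hpj : HasFDerivAt (fun y : Fin 2 → ℝ => y j)
      (ContinuousLinearMap.proj j : (Fin 2 → ℝ) →L[ℝ] ℝ) x :=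
    (ContinuousLinearMap.proj j : (Fin 2 → ℝ) →L[ℝ] ℝ).hasFDerivAt
  have hP : HasFDerivAt (fun y : Fin 2 → ℝ => lam + φ (y i))
      ((deriv φ (x i)) • (ContinuousLinearMap.proj i : (Fin 2 → ℝ) →L[ℝ] ℝ)) x :=
    (((hφ.differentiable (by simp) (x i)).hasDerivAt).comp_hasFDerivAt x hpi).const_add lam
  have hQ : HasFDerivAt (fun y : Fin 2 → ℝ => lam + ψ (y j))
      ((deriv ψ (x j)) • (ContinuousLinearMap.proj j : (Fin 2 → ℝ) →L[ℝ] ℝ)) x :=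
    (((hψ.differentiable (by simp) (x j)).hasDerivAt).comp_hasFDerivAt x hpj).const_add lam
  have hQinv := (hasDerivAt_inv hq.ne').comp_hasFDerivAt x hQ
  have hR0 := hP.mul hQinv
  have hR : HasFDerivAt (fun y : Fin 2 → ℝ => (lam + φ (y i)) / (lam + ψ (y j)))
      ((lam + φ (x i)) • (-((lam + ψ (x j)) ^ 2)⁻¹ •
          ((deriv ψ (x j)) • (ContinuousLinearMap.proj j : (Fin 2 → ℝ) →L[ℝ] ℝ))) +
        (lam + ψ (x j))⁻¹ •
          ((deriv φ (x i)) • (ContinuousLinearMap.proj i : (Fin 2 → ℝ) →L[ℝ] ℝ))) x :=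
    hR0.congr_of_eventuallyEq (Filter.Eventually.of_forall fun y => (div_eq_mul_inv _ _))
  have hS := hR.sqrt (by positivity : (lam + φ (x i)) / (lam + ψ (x j)) ≠ 0)
  have hF := hS.mul hβ.hasFDerivAt
  rw [pd, show fderiv ℝ (fun y => Real.sqrt ((lam + φ (y i)) / (lam + ψ (y j))) * β y) x = _ from hF.fderiv]
  have h1 : (ContinuousLinearMap.proj i : (Fin 2 → ℝ) →L[ℝ] ℝ) (Pi.single i 1) = 1 := by simp
  have h2 : (ContinuousLinearMap.proj j : (Fin 2 → ℝ) →L[ℝ] ℝ) (Pi.single i 1) = 0 := by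
    simp [Pi.single_eq_of_ne hij.symm]
  simp only [ContinuousLinearMap.add_apply, ContinuousLinearMap.smul_apply,
    ContinuousLinearMap.neg_apply, h1, h2, smul_eq_mul]
  have hA : Real.sqrt (lam + φ (x i)) > 0 := Real.sqrt_pos.mpr hp
  have hB : Real.sqrt (lam + ψ (x j)) > 0 := Real.sqrt_pos.mpr hq
  have hBB : Real.sqrt (lam + ψ (x j)) * Real.sqrt (lam + ψ (x j)) = lam + ψ (x j) :=
    Real.mul_self_sqrt hq.le
  have hdiv : Real.sqrt ((lam + φ (x i)) / (lam + ψ (x j)))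
      = Real.sqrt (lam + φ (x i)) / Real.sqrt (lam + ψ (x j)) := Real.sqrt_div hp.le _
  rw [hdiv]
  unfold pd
  rw [show lam + ψ (x j) = Real.sqrt (lam + ψ (x j)) * Real.sqrt (lam + ψ (x j)) from hBB.symm]
  field_simp
  linear_combination Real.sqrt (lam + ψ (x j)) ^ 2 * β x * deriv φ (x i) *
    Real.sq_sqrt (sq_nonneg (Real.sqrt (lam + ψ (x j))))

lemma pd_dsq (φ : ℝ → ℝ) (hφ : ContDiff ℝ (⊤ : ℕ∞) φ) (H : (Fin 2 → ℝ) → ℝ)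
    (x : Fin 2 → ℝ) (hH : DifferentiableAt ℝ H x) (i j : Fin 2) (hij : i ≠ j) (lam : ℝ)
    (hp : 0 < lam + φ (x i)) :
    pd j (fun y => H y / Real.sqrt (lam + φ (y i))) x
      = pd j H x / Real.sqrt (lam + φ (x i)) := by
  have hpi : HasFDerivAt (fun y : Fin 2 → ℝ => y i)
      (ContinuousLinearMap.proj i : (Fin 2 → ℝ) →L[ℝ] ℝ) x :=
    (ContinuousLinearMap.proj i : (Fin 2 → ℝ) →L[ℝ] ℝ).hasFDerivAt
  have hP : HasFDerivAt (fun y : Fin 2 → ℝ => lam + φ (y i))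
      ((deriv φ (x i)) • (ContinuousLinearMap.proj i : (Fin 2 → ℝ) →L[ℝ] ℝ)) x :=
    (((hφ.differentiable (by simp) (x i)).hasDerivAt).comp_hasFDerivAt x hpi).const_add lam
  have hA : (0:ℝ) < Real.sqrt (lam + φ (x i)) := Real.sqrt_pos.mpr hp
  have hS := hP.sqrt hp.ne'
  have hSinv := (hasDerivAt_inv hA.ne').comp_hasFDerivAt x hS
  have hF0 := hH.hasFDerivAt.mul hSinv
  have hF : HasFDerivAt (fun y => H y / Real.sqrt (lam + φ (y i)))
      (H x • (-(Real.sqrt (lam + φ (x i)) ^ 2)⁻¹ •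
          ((1 / (2 * Real.sqrt (lam + φ (x i)))) •
            ((deriv φ (x i)) • (ContinuousLinearMap.proj i : (Fin 2 → ℝ) →L[ℝ] ℝ)))) +
        (Real.sqrt (lam + φ (x i)))⁻¹ • fderiv ℝ H x) x :=
    hF0.congr_of_eventuallyEq (Filter.Eventually.of_forall fun y => (div_eq_mul_inv _ _))
  rw [pd, hF.fderiv]
  have h2 : (ContinuousLinearMap.proj i : (Fin 2 → ℝ) →L[ℝ] ℝ) (Pi.single j 1) = 0 := by
    simp [Pi.single_eq_of_ne hij]
  simp only [ContinuousLinearMap.add_apply, ContinuousLinearMap.smul_apply, h2, smul_eq_mul,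
    mul_zero, zero_add]
  unfold pd
  field_simp

set_option maxHeartbeats 2000000 in
lemma key (η₁ η₂ : ℝ → ℝ) (hη₁ : ContDiff ℝ (⊤ : ℕ∞) η₁) (hη₂ : ContDiff ℝ (⊤ : ℕ∞) η₂)
    (H₁ H₂ β₁₂ β₂₁ : (Fin 2 → ℝ) → ℝ) (x : Fin 2 → ℝ)
    (dH₁ : DifferentiableAt ℝ H₁ x) (dH₂ : DifferentiableAt ℝ H₂ x)
    (dβ₁₂ : DifferentiableAt ℝ β₁₂ x) (dβ₂₁ : DifferentiableAt ℝ β₂₁ x)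
    (lam : ℝ) (hp : 0 < lam + η₁ (x 0)) (hq : 0 < lam + η₂ (x 1)) :
    (∀ a b : Fin 3,
      pd 0 (laxA2 η₁ η₂ β₁₂ H₂ lam a b) x - pd 1 (laxA1 η₁ η₂ β₂₁ H₁ lam a b) x =
        ∑ s : Fin 3, (laxA1 η₁ η₂ β₂₁ H₁ lam a s x * laxA2 η₁ η₂ β₁₂ H₂ lam s b x -
          laxA2 η₁ η₂ β₁₂ H₂ lam a s x * laxA1 η₁ η₂ β₂₁ H₁ lam s b x)) ↔
    (pd 0 H₂ x = β₁₂ x * H₁ x ∧ pd 1 H₁ x = β₂₁ x * H₂ x ∧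
      (lam + η₁ (x 0)) * pd 0 β₁₂ x + (lam + η₂ (x 1)) * pd 1 β₂₁ x +
        (1/2) * deriv η₁ (x 0) * β₁₂ x + (1/2) * deriv η₂ (x 1) * β₂₁ x +
        H₁ x * H₂ x = 0) := by
  have hA : Real.sqrt (lam + η₁ (x 0)) > 0 := Real.sqrt_pos.mpr hp
  have hB : Real.sqrt (lam + η₂ (x 1)) > 0 := Real.sqrt_pos.mpr hq
  have hAA : Real.sqrt (lam + η₁ (x 0)) * Real.sqrt (lam + η₁ (x 0)) = lam + η₁ (x 0) :=
    Real.mul_self_sqrt hp.le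
  have hBB : Real.sqrt (lam + η₂ (x 1)) * Real.sqrt (lam + η₂ (x 1)) = lam + η₂ (x 1) :=
    Real.mul_self_sqrt hq.le
  -- pd of entries
  have e21 : pd 0 (laxA2 η₁ η₂ β₁₂ H₂ lam 0 1) x
      = Real.sqrt (lam + η₁ (x 0)) / Real.sqrt (lam + η₂ (x 1)) * pd 0 β₁₂ x
        + β₁₂ x * (deriv η₁ (x 0) /
            (2 * (Real.sqrt (lam + η₁ (x 0)) * Real.sqrt (lam + η₂ (x 1))))) :=
    pd_srm η₁ η₂ hη₁ hη₂ β₁₂ x dβ₁₂ 0 1 (by decide) lam hp hq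
  have e21' : pd 0 (laxA2 η₁ η₂ β₁₂ H₂ lam 1 0) x
      = -(Real.sqrt (lam + η₁ (x 0)) / Real.sqrt (lam + η₂ (x 1)) * pd 0 β₁₂ x
        + β₁₂ x * (deriv η₁ (x 0) /
            (2 * (Real.sqrt (lam + η₁ (x 0)) * Real.sqrt (lam + η₂ (x 1)))))) := by
    rw [show laxA2 η₁ η₂ β₁₂ H₂ lam 1 0
        = fun y => -(Real.sqrt ((lam + η₁ (y 0)) / (lam + η₂ (y 1))) * β₁₂ y) from rfl,
      pd_neg, ← e21]
    rfl
  have e11 : pd 1 (laxA1 η₁ η₂ β₂₁ H₁ lam 0 1) x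
      = -(Real.sqrt (lam + η₂ (x 1)) / Real.sqrt (lam + η₁ (x 0)) * pd 1 β₂₁ x
        + β₂₁ x * (deriv η₂ (x 1) /
            (2 * (Real.sqrt (lam + η₂ (x 1)) * Real.sqrt (lam + η₁ (x 0)))))) := by
    rw [show laxA1 η₁ η₂ β₂₁ H₁ lam 0 1
        = fun y => -(Real.sqrt ((lam + η₂ (y 1)) / (lam + η₁ (y 0))) * β₂₁ y) from rfl,
      pd_neg, pd_srm η₂ η₁ hη₂ hη₁ β₂₁ x dβ₂₁ 1 0 (by decide) lam hq hp]
  have e11' : pd 1 (laxA1 η₁ η₂ β₂₁ H₁ lam 1 0) x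
      = Real.sqrt (lam + η₂ (x 1)) / Real.sqrt (lam + η₁ (x 0)) * pd 1 β₂₁ x
        + β₂₁ x * (deriv η₂ (x 1) /
            (2 * (Real.sqrt (lam + η₂ (x 1)) * Real.sqrt (lam + η₁ (x 0))))) :=
    pd_srm η₂ η₁ hη₂ hη₁ β₂₁ x dβ₂₁ 1 0 (by decide) lam hq hp
  have e12 : pd 1 (laxA1 η₁ η₂ β₂₁ H₁ lam 0 2) x
      = pd 1 H₁ x / Real.sqrt (lam + η₁ (x 0)) :=
    pd_dsq η₁ hη₁ H₁ x dH₁ 0 1 (by decide) lam hp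
  have e12' : pd 1 (laxA1 η₁ η₂ β₂₁ H₁ lam 2 0) x
      = -(pd 1 H₁ x / Real.sqrt (lam + η₁ (x 0))) := by
    rw [show laxA1 η₁ η₂ β₂₁ H₁ lam 2 0
        = fun y => -(H₁ y / Real.sqrt (lam + η₁ (y 0))) from rfl, pd_neg, ← e12]
    rfl
  have e22 : pd 0 (laxA2 η₁ η₂ β₁₂ H₂ lam 1 2) x
      = pd 0 H₂ x / Real.sqrt (lam + η₂ (x 1)) :=
    pd_dsq η₂ hη₂ H₂ x dH₂ 1 0 (by decide) lam hq
  have e22' : pd 0 (laxA2 η₁ η₂ β₁₂ H₂ lam 2 1) x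
      = -(pd 0 H₂ x / Real.sqrt (lam + η₂ (x 1))) := by
    rw [show laxA2 η₁ η₂ β₁₂ H₂ lam 2 1
        = fun y => -(H₂ y / Real.sqrt (lam + η₂ (y 1))) from rfl, pd_neg, ← e22]
    rfl
  have hdPQ : Real.sqrt ((lam + η₁ (x 0)) / (lam + η₂ (x 1)))
      = Real.sqrt (lam + η₁ (x 0)) / Real.sqrt (lam + η₂ (x 1)) := Real.sqrt_div hp.le _
  have hdQP : Real.sqrt ((lam + η₂ (x 1)) / (lam + η₁ (x 0)))
      = Real.sqrt (lam + η₂ (x 1)) / Real.sqrt (lam + η₁ (x 0)) := Real.sqrt_div hq.le _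
  constructor
  · intro h
    have h12 := h 1 2
    have h02 := h 0 2
    have h01 := h 0 1
    rw [e22, show pd 1 (laxA1 η₁ η₂ β₂₁ H₁ lam 1 2) x = 0 from pd_zero x] at h12
    rw [show pd 0 (laxA2 η₁ η₂ β₁₂ H₂ lam 0 2) x = 0 from pd_zero x, e12] at h02
    rw [e21, e11] at h01
    simp [laxA1, laxA2, Fin.sum_univ_three, hdPQ, hdQP, Matrix.vecHead, Matrix.vecTail] at h12 h02 h01
    refine ⟨?_, ?_, ?_⟩
    · field_simp at h12
      exact h12
    · field_simp at h02
      exact h02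
    · field_simp at h01
      have key3 : (4 * Real.sqrt (lam + η₁ (x 0)) ^ 3 * Real.sqrt (lam + η₂ (x 1)) ^ 3) *
          ((lam + η₁ (x 0)) * pd 0 β₁₂ x + (lam + η₂ (x 1)) * pd 1 β₂₁ x +
            (1/2) * deriv η₁ (x 0) * β₁₂ x + (1/2) * deriv η₂ (x 1) * β₂₁ x +
            H₁ x * H₂ x) = 0 := by
        linear_combination 2 * Real.sqrt (lam + η₁ (x 0)) ^ 3 * Real.sqrt (lam + η₂ (x 1)) ^ 3 * h01 - 4 * pd 0 β₁₂ x * Real.sqrt (lam + η₁ (x 0)) ^ 3 *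
            Real.sqrt (lam + η₂ (x 1)) ^ 3 * hAA -
          4 * pd 1 β₂₁ x * Real.sqrt (lam + η₁ (x 0)) ^ 3 *
            Real.sqrt (lam + η₂ (x 1)) ^ 3 * hBB
      rcases mul_eq_zero.mp key3 with h0 | h0
      · exact absurd h0 (by positivity)
      · exact h0
  · rintro ⟨k1, k2, k3⟩
    have g00 : pd 0 (laxA2 η₁ η₂ β₁₂ H₂ lam 0 0) x - pd 1 (laxA1 η₁ η₂ β₂₁ H₁ lam 0 0) x =
        ∑ s : Fin 3, (laxA1 η₁ η₂ β₂₁ H₁ lam 0 s x * laxA2 η₁ η₂ β₁₂ H₂ lam s 0 x -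
          laxA2 η₁ η₂ β₁₂ H₂ lam 0 s x * laxA1 η₁ η₂ β₂₁ H₁ lam s 0 x) := by
      rw [show laxA2 η₁ η₂ β₁₂ H₂ lam 0 0 = fun _ => (0:ℝ) from rfl,
          show laxA1 η₁ η₂ β₂₁ H₁ lam 0 0 = fun _ => (0:ℝ) from rfl, pd_zero, pd_zero]
      simp [laxA1, laxA2, Fin.sum_univ_three, Matrix.vecHead, Matrix.vecTail]
      try ring
    have g11 : pd 0 (laxA2 η₁ η₂ β₁₂ H₂ lam 1 1) x - pd 1 (laxA1 η₁ η₂ β₂₁ H₁ lam 1 1) x =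
        ∑ s : Fin 3, (laxA1 η₁ η₂ β₂₁ H₁ lam 1 s x * laxA2 η₁ η₂ β₁₂ H₂ lam s 1 x -
          laxA2 η₁ η₂ β₁₂ H₂ lam 1 s x * laxA1 η₁ η₂ β₂₁ H₁ lam s 1 x) := by
      rw [show laxA2 η₁ η₂ β₁₂ H₂ lam 1 1 = fun _ => (0:ℝ) from rfl,
          show laxA1 η₁ η₂ β₂₁ H₁ lam 1 1 = fun _ => (0:ℝ) from rfl, pd_zero, pd_zero]
      simp [laxA1, laxA2, Fin.sum_univ_three, Matrix.vecHead, Matrix.vecTail]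
      try ring
    have g22 : pd 0 (laxA2 η₁ η₂ β₁₂ H₂ lam 2 2) x - pd 1 (laxA1 η₁ η₂ β₂₁ H₁ lam 2 2) x =
        ∑ s : Fin 3, (laxA1 η₁ η₂ β₂₁ H₁ lam 2 s x * laxA2 η₁ η₂ β₁₂ H₂ lam s 2 x -
          laxA2 η₁ η₂ β₁₂ H₂ lam 2 s x * laxA1 η₁ η₂ β₂₁ H₁ lam s 2 x) := by
      rw [show laxA2 η₁ η₂ β₁₂ H₂ lam 2 2 = fun _ => (0:ℝ) from rfl,
          show laxA1 η₁ η₂ β₂₁ H₁ lam 2 2 = fun _ => (0:ℝ) from rfl, pd_zero, pd_zero]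
      simp [laxA1, laxA2, Fin.sum_univ_three, Matrix.vecHead, Matrix.vecTail]
      try ring
    have g01 : pd 0 (laxA2 η₁ η₂ β₁₂ H₂ lam 0 1) x - pd 1 (laxA1 η₁ η₂ β₂₁ H₁ lam 0 1) x =
        ∑ s : Fin 3, (laxA1 η₁ η₂ β₂₁ H₁ lam 0 s x * laxA2 η₁ η₂ β₁₂ H₂ lam s 1 x -
          laxA2 η₁ η₂ β₁₂ H₂ lam 0 s x * laxA1 η₁ η₂ β₂₁ H₁ lam s 1 x) := by
      rw [e21, e11]
      simp [laxA1, laxA2, Fin.sum_univ_three, hdPQ, hdQP, Matrix.vecHead, Matrix.vecTail]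
      field_simp
      linear_combination 2 * k3 + 2 * pd 0 β₁₂ x * hAA + 2 * pd 1 β₂₁ x * hBB
    have g10 : pd 0 (laxA2 η₁ η₂ β₁₂ H₂ lam 1 0) x - pd 1 (laxA1 η₁ η₂ β₂₁ H₁ lam 1 0) x =
        ∑ s : Fin 3, (laxA1 η₁ η₂ β₂₁ H₁ lam 1 s x * laxA2 η₁ η₂ β₁₂ H₂ lam s 0 x -
          laxA2 η₁ η₂ β₁₂ H₂ lam 1 s x * laxA1 η₁ η₂ β₂₁ H₁ lam s 0 x) := by
      rw [e21', e11']
      simp [laxA1, laxA2, Fin.sum_univ_three, hdPQ, hdQP, Matrix.vecHead, Matrix.vecTail]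
      field_simp
      linear_combination -(2 * k3 + 2 * pd 0 β₁₂ x * hAA + 2 * pd 1 β₂₁ x * hBB)
    have g02 : pd 0 (laxA2 η₁ η₂ β₁₂ H₂ lam 0 2) x - pd 1 (laxA1 η₁ η₂ β₂₁ H₁ lam 0 2) x =
        ∑ s : Fin 3, (laxA1 η₁ η₂ β₂₁ H₁ lam 0 s x * laxA2 η₁ η₂ β₁₂ H₂ lam s 2 x -
          laxA2 η₁ η₂ β₁₂ H₂ lam 0 s x * laxA1 η₁ η₂ β₂₁ H₁ lam s 2 x) := by
      rw [show pd 0 (laxA2 η₁ η₂ β₁₂ H₂ lam 0 2) x = 0 from pd_zero x, e12]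
      simp [laxA1, laxA2, Fin.sum_univ_three, hdPQ, hdQP, Matrix.vecHead, Matrix.vecTail]
      field_simp
      linear_combination k2
    have g20 : pd 0 (laxA2 η₁ η₂ β₁₂ H₂ lam 2 0) x - pd 1 (laxA1 η₁ η₂ β₂₁ H₁ lam 2 0) x =
        ∑ s : Fin 3, (laxA1 η₁ η₂ β₂₁ H₁ lam 2 s x * laxA2 η₁ η₂ β₁₂ H₂ lam s 0 x -
          laxA2 η₁ η₂ β₁₂ H₂ lam 2 s x * laxA1 η₁ η₂ β₂₁ H₁ lam s 0 x) := by
      rw [show pd 0 (laxA2 η₁ η₂ β₁₂ H₂ lam 2 0) x = 0 from pd_zero x, e12']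
      simp [laxA1, laxA2, Fin.sum_univ_three, hdPQ, hdQP, Matrix.vecHead, Matrix.vecTail]
      field_simp
      linear_combination k2
    have g12 : pd 0 (laxA2 η₁ η₂ β₁₂ H₂ lam 1 2) x - pd 1 (laxA1 η₁ η₂ β₂₁ H₁ lam 1 2) x =
        ∑ s : Fin 3, (laxA1 η₁ η₂ β₂₁ H₁ lam 1 s x * laxA2 η₁ η₂ β₁₂ H₂ lam s 2 x -
          laxA2 η₁ η₂ β₁₂ H₂ lam 1 s x * laxA1 η₁ η₂ β₂₁ H₁ lam s 2 x) := by
      rw [e22, show pd 1 (laxA1 η₁ η₂ β₂₁ H₁ lam 1 2) x = 0 from pd_zero x]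
      simp [laxA1, laxA2, Fin.sum_univ_three, hdPQ, hdQP, Matrix.vecHead, Matrix.vecTail]
      field_simp
      linear_combination k1
    have g21 : pd 0 (laxA2 η₁ η₂ β₁₂ H₂ lam 2 1) x - pd 1 (laxA1 η₁ η₂ β₂₁ H₁ lam 2 1) x =
        ∑ s : Fin 3, (laxA1 η₁ η₂ β₂₁ H₁ lam 2 s x * laxA2 η₁ η₂ β₁₂ H₂ lam s 1 x -
          laxA2 η₁ η₂ β₁₂ H₂ lam 2 s x * laxA1 η₁ η₂ β₂₁ H₁ lam s 1 x) := by
      rw [e22', show pd 1 (laxA1 η₁ η₂ β₂₁ H₁ lam 2 1) x = 0 from pd_zero x]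
      simp [laxA1, laxA2, Fin.sum_univ_three, hdPQ, hdQP, Matrix.vecHead, Matrix.vecTail]
      field_simp
      linear_combination k1
    intro a b
    fin_cases a <;> fin_cases b
    exacts [g00, g01, g02, g10, g11, g12, g20, g21, g22]

/-- The zero-curvature equation `∂_1 A_2(λ) − ∂_2 A_1(λ) = [A_1(λ), A_2(λ)]` holds for
every admissible `λ` iff `(H_1, H_2, β_{12}, β_{21})` satisfies system (4) governing
deformations of surfaces preserving the Weingarten operator. -/
theorem lax_pair_iff_system4 (U : Set (Fin 2 → ℝ)) (hU : IsOpen U)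
    (H₁ H₂ β₁₂ β₂₁ : (Fin 2 → ℝ) → ℝ)
    (hH₁ : ContDiffOn ℝ (⊤ : ℕ∞) H₁ U) (hH₂ : ContDiffOn ℝ (⊤ : ℕ∞) H₂ U)
    (hβ₁₂ : ContDiffOn ℝ (⊤ : ℕ∞) β₁₂ U) (hβ₂₁ : ContDiffOn ℝ (⊤ : ℕ∞) β₂₁ U)
    (η₁ η₂ : ℝ → ℝ) (hη₁ : ContDiff ℝ (⊤ : ℕ∞) η₁) (hη₂ : ContDiff ℝ (⊤ : ℕ∞) η₂)
    (hadm : {lam : ℝ | ∀ x ∈ U, 0 < lam + η₁ (x 0) ∧ 0 < lam + η₂ (x 1)}.Infinite) :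
    (∀ lam : ℝ, (∀ x ∈ U, 0 < lam + η₁ (x 0) ∧ 0 < lam + η₂ (x 1)) →
      ∀ x ∈ U, ∀ a b : Fin 3,
        pd 0 (laxA2 η₁ η₂ β₁₂ H₂ lam a b) x - pd 1 (laxA1 η₁ η₂ β₂₁ H₁ lam a b) x =
          ∑ s : Fin 3,
            (laxA1 η₁ η₂ β₂₁ H₁ lam a s x * laxA2 η₁ η₂ β₁₂ H₂ lam s b x -
             laxA2 η₁ η₂ β₁₂ H₂ lam a s x * laxA1 η₁ η₂ β₂₁ H₁ lam s b x)) ↔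
    (∀ x ∈ U,
      pd 0 H₂ x = β₁₂ x * H₁ x ∧
      pd 1 H₁ x = β₂₁ x * H₂ x ∧
      pd 0 β₁₂ x + pd 1 β₂₁ x = 0 ∧
      η₁ (x 0) * pd 0 β₁₂ x + η₂ (x 1) * pd 1 β₂₁ x +
        (1 / 2) * deriv η₁ (x 0) * β₁₂ x + (1 / 2) * deriv η₂ (x 1) * β₂₁ x +
        H₁ x * H₂ x = 0) := by
  have hdiff : ∀ x ∈ U, DifferentiableAt ℝ H₁ x ∧ DifferentiableAt ℝ H₂ x ∧
      DifferentiableAt ℝ β₁₂ x ∧ DifferentiableAt ℝ β₂₁ x := by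
    intro x hx
    exact ⟨((hH₁.differentiableOn (by simp)) x hx).differentiableAt (hU.mem_nhds hx),
      ((hH₂.differentiableOn (by simp)) x hx).differentiableAt (hU.mem_nhds hx),
      ((hβ₁₂.differentiableOn (by simp)) x hx).differentiableAt (hU.mem_nhds hx),
      ((hβ₂₁.differentiableOn (by simp)) x hx).differentiableAt (hU.mem_nhds hx)⟩
  constructor
  · intro h x hx
    obtain ⟨dH₁, dH₂, dβ₁₂, dβ₂₁⟩ := hdiff x hx
    obtain ⟨lam₁, hl₁, lam₂, hl₂, hne⟩ := hadm.nontrivial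
    have K₁ := (key η₁ η₂ hη₁ hη₂ H₁ H₂ β₁₂ β₂₁ x dH₁ dH₂ dβ₁₂ dβ₂₁ lam₁
      (hl₁ x hx).1 (hl₁ x hx).2).mp (h lam₁ hl₁ x hx)
    have K₂ := (key η₁ η₂ hη₁ hη₂ H₁ H₂ β₁₂ β₂₁ x dH₁ dH₂ dβ₁₂ dβ₂₁ lam₂
      (hl₂ x hx).1 (hl₂ x hx).2).mp (h lam₂ hl₂ x hx)
    obtain ⟨k1, k2, k31⟩ := K₁
    obtain ⟨-, -, k32⟩ := K₂
    have hS : pd 0 β₁₂ x + pd 1 β₂₁ x = 0 := by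
      have hd : (lam₁ - lam₂) * (pd 0 β₁₂ x + pd 1 β₂₁ x) = 0 := by
        linear_combination k31 - k32
      rcases mul_eq_zero.mp hd with h0 | h0
      · exact absurd (sub_eq_zero.mp h0) hne
      · exact h0
    exact ⟨k1, k2, hS, by linear_combination k31 - lam₁ * hS⟩
  · intro h lam hl x hx
    obtain ⟨dH₁, dH₂, dβ₁₂, dβ₂₁⟩ := hdiff x hx
    obtain ⟨h1, h2, h3, h4⟩ := h x hx
    exact (key η₁ η₂ hη₁ hη₂ H₁ H₂ β₁₂ β₂₁ x dH₁ dH₂ dβ₁₂ dβ₂₁ lam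
      (hl x hx).1 (hl x hx).2).mpr ⟨h1, h2, by linear_combination lam * h3 + h4⟩
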